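/- arXiv:1611.09197 — 2 statements merged into one kernel-verified Lean document; each statement's English description precedes it below -/
import Mathlib

section
/- If the distribution F is absolutely continuous with respect to Lebesgue measure, then for every R₀ < R Condition (A) holds, i.e. limsup_{θ→±∞} sup_{0≤r≤R₀} |1/(1 − g(r+iθ))| < ∞. -/
open MeasureTheory Filter Complex Set Asymptotics ProbabilityTheory

noncomputable section

/-- The residue of `f` at `c`: the limit, as `r → 0⁺`, of `(2πi)⁻¹ ∮_{|z-c|=r} f`. -/
def residue (f : ℂ → ℂ) (c : ℂ) : ℂ :=
  limUnder (nhdsWithin 0 (Set.Ioi (0 : ℝ)))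
    fun r => (2 * Real.pi * Complex.I)⁻¹ * (∮ z in C(c, r), f z)

/-- `n`-fold convolution power of a measure on `ℝ`. -/
def convPow (F : Measure ℝ) : ℕ → Measure ℝ
  | 0 => Measure.dirac 0
  | n + 1 => Measure.map (fun p : ℝ × ℝ => p.1 + p.2) ((convPow F n).prod F)

/-- Renewal function `U(x) = ∑ₙ F^{*n}((-∞, x])`. -/
def renewalFn (F : Measure ℝ) (x : ℝ) : ℝ :=
  (∑' n : ℕ, convPow F n (Set.Iic x)).toReal

/-- Complex moment generating function `g(z) = ∫ e^{zx} dF(x)`. -/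
def cmgf (F : Measure ℝ) (z : ℂ) : ℂ :=
  ∫ x, Complex.exp (z * x) ∂F

/-- `F` is lattice with mesh `1`: supported on `ℕ` but not on `hℕ` for any integer `h > 1`. -/
def LatticeMeshOne (F : Measure ℝ) : Prop :=
  F {x : ℝ | ∀ n : ℕ, x ≠ n} = 0 ∧
    ∀ h : ℕ, 2 ≤ h → 0 < F {x : ℝ | ∀ n : ℕ, x ≠ ((h * n : ℕ) : ℝ)}

/-- Condition (A) at level `R₀`:
`limsup_{θ→±∞} sup_{0 ≤ r ≤ R₀} |1/(1 - g(r+iθ))| < ∞`, phrased as an eventual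
uniform lower bound on `‖1 - g(r+iθ)‖`. -/
def CondA (g : ℂ → ℂ) (R₀ : ℝ) : Prop :=
  ∃ C > (0:ℝ), ∀ᶠ θ : ℝ in (Filter.atTop ⊔ Filter.atBot),
    ∀ r ∈ Set.Icc (0:ℝ) R₀, 1 ≤ C * ‖1 - g ((r : ℂ) + (θ : ℂ) * Complex.I)‖

/-!
Writing `dF = f dx`, the value `g(r + iθ)` is the Fourier transform of `f(x) e^{rx}` at `θ`,
so it tends to `0` as `θ → ±∞` for each fixed `r` (Riemann–Lebesgue). Since
`|∂ᵣ g(r + iθ)| ≤ ∫ x e^{R₀x} dF(x)` for `r ≤ R₀`, the functions `r ↦ g(r + iθ)` are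
equi-Lipschitz on `[0, R₀]`, so by compactness the convergence is uniform in `r ∈ [0, R₀]`.
Eventually `|g(r + iθ)| ≤ 1/2`, hence `|1 - g(r + iθ)| ≥ 1/2`.
-/

open Topology

theorem EquicontinuousOn.tendstoUniformlyOn_of_tendsto {ι X α : Type*} [TopologicalSpace X]
    [UniformSpace α] {F : ι → X → α} {f : X → α} {l : Filter ι} {s : Set X}
    (hF : EquicontinuousOn F s) (hs : IsCompact s)
    (hFf : ∀ x ∈ s, Tendsto (F · x) l (𝓝 (f x))) :
    TendstoUniformlyOn F f l s := by
  have hunif := (EquicontinuousOn.tendsto_uniformOnFun_iff_pi' (𝔖 := {s}) (by simpa)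
    (by simpa) l f).2 (by rw [sUnion_singleton]; exact tendsto_pi_nhds.2 fun x => hFf x x.2)
  exact UniformOnFun.tendsto_iff_tendstoUniformlyOn.1 hunif s rfl

lemma abs_exp_mul_sub_exp_mul_le {r r' M x : ℝ} (hx : 0 ≤ x) (hr : r ≤ M) (hr' : r' ≤ M) :
    |Real.exp (r * x) - Real.exp (r' * x)| ≤ x * Real.exp (M * x) * |r - r'| := by
  have hderiv : ∀ s ∈ Iic M, HasDerivWithinAt (fun s => Real.exp (s * x))
      (Real.exp (s * x) * x) (Iic M) s := fun s _ =>
    (((hasDerivAt_id s).mul_const x).exp.congr_deriv (by simp)).hasDerivWithinAt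
  have hbound : ∀ s ∈ Iic M, ‖Real.exp (s * x) * x‖ ≤ x * Real.exp (M * x) := by
    intro s hs
    rw [Real.norm_eq_abs, abs_of_nonneg (by positivity), mul_comm]
    gcongr
    exact hs
  exact (convex_Iic M).norm_image_sub_le_of_norm_hasDerivWithin_le hderiv hbound hr' hr

section cmgf

variable {F : Measure ℝ}

lemma integrable_cexp_mul_of_re_le (hF : ∀ᵐ x ∂F, 0 ≤ x) {r : ℝ}
    (hexp : Integrable (fun x => Real.exp (r * x)) F) {z : ℂ} (hz : z.re ≤ r) :
    Integrable (fun x : ℝ => cexp (z * x)) F := by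
  refine hexp.mono (by fun_prop) ?_
  filter_upwards [hF] with x hx
  rw [norm_exp, Real.norm_of_nonneg (Real.exp_pos _).le, re_mul_ofReal]
  gcongr

lemma integrable_mul_exp_of_lt (hF : ∀ᵐ x ∂F, 0 ≤ x) {M r : ℝ} (hMr : M < r)
    (hexp : Integrable (fun x => Real.exp (r * x)) F) :
    Integrable (fun x => x * Real.exp (M * x)) F := by
  refine (hexp.const_mul (r - M)⁻¹).mono (by fun_prop) ?_
  filter_upwards [hF] with x hx
  have hsplit : Real.exp (r * x) = Real.exp ((r - M) * x) * Real.exp (M * x) := by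
    rw [← Real.exp_add]; ring_nf
  rw [Real.norm_of_nonneg (by positivity), Real.norm_of_nonneg (by positivity), hsplit,
    ← mul_assoc]
  gcongr ?_ * _
  rw [le_inv_mul_iff₀ (sub_pos.2 hMr)]
  linarith [Real.add_one_le_exp ((r - M) * x)]

lemma lipschitzOnWith_cmgf_vertical (hF : ∀ᵐ x ∂F, 0 ≤ x) {M r : ℝ} (hMr : M < r)
    (hexp : Integrable (fun x => Real.exp (r * x)) F) (θ : ℝ) :
    LipschitzOnWith (∫ x, x * Real.exp (M * x) ∂F).toNNReal
      (fun s : ℝ => cmgf F (s + θ * I)) (Iic M) := by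
  have hint : ∀ s ∈ Iic M, Integrable (fun x : ℝ => cexp ((s + θ * I) * x)) F := fun s hs =>
    integrable_cexp_mul_of_re_le hF hexp (by simpa using hs.out.trans hMr.le)
  refine LipschitzOnWith.of_dist_le_mul fun s hs s' hs' => ?_
  have hL : 0 ≤ ∫ x, x * Real.exp (M * x) ∂F :=
    integral_nonneg_of_ae (by filter_upwards [hF] with x hx; positivity)
  rw [Real.coe_toNNReal _ hL, dist_eq_norm, cmgf, cmgf, ← integral_sub (hint s hs) (hint s' hs'),
    Real.dist_eq, ← integral_mul_const]
  refine (norm_integral_le_integral_norm _).trans <| integral_mono_of_nonneg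
    (.of_forall fun _ => norm_nonneg _)
    ((integrable_mul_exp_of_lt hF hMr hexp).mul_const _) ?_
  filter_upwards [hF] with x hx
  have hsplit : ∀ t : ℝ,
      cexp ((t + θ * I) * x) = cexp (((θ * x : ℝ) : ℂ) * I) * (Real.exp (t * x) : ℂ) := by
    intro t
    rw [ofReal_exp, ← Complex.exp_add]; push_cast; ring_nf
  rw [hsplit, hsplit, ← mul_sub, norm_mul, norm_exp_ofReal_mul_I, one_mul, ← ofReal_sub,
    norm_real, Real.norm_eq_abs]
  exact abs_exp_mul_sub_exp_mul_le hx hs hs'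

lemma tendsto_cmgf_vertical_cocompact [SigmaFinite F] (hac : F ≪ volume) (r : ℝ) :
    Tendsto (fun θ : ℝ => cmgf F (r + θ * I)) (cocompact ℝ) (𝓝 0) := by
  set f : ℝ → ℂ := fun x => (F.rnDeriv volume x).toReal • cexp (r * x)
  -- `𝐞 (-(x * (-(2π)⁻¹ * θ))) = e^{iθx}`
  have hrescale : Tendsto (fun θ : ℝ => -(2 * Real.pi)⁻¹ * θ) (cocompact ℝ) (cocompact ℝ) :=
    tendsto_cocompact_mul_left₀ (by simp [Real.pi_ne_zero])
  refine ((Real.tendsto_integral_exp_smul_cocompact f).comp hrescale).congr fun θ => ?_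
  simp only [Function.comp_apply, cmgf, f]
  rw [← integral_rnDeriv_smul hac]
  congr 1 with x
  rw [Circle.smul_def, Real.fourierChar_apply, smul_comm, smul_eq_mul, ← Complex.exp_add]
  congr 2
  push_cast
  field_simp
  ring

end cmgf

/-- **Proposition (Condition (A) for absolutely continuous distributions).**
If the distribution `F` (a probability measure on `[0,∞)` with `R > 0`) is absolutely
continuous with respect to Lebesgue measure, then for every `R₀ < R` Condition (A) holds:
`limsup_{θ→±∞} sup_{0 ≤ r ≤ R₀} |1/(1 - g(r+iθ))| < ∞`. -/
theorem condA_of_absolutelyContinuous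
    (F : Measure ℝ) [IsProbabilityMeasure F]
    (hsupp : F (Set.Iio 0) = 0)
    (hac : F ≪ (volume : Measure ℝ))
    (R₀ : ℝ) (hR₀ltR : ∃ r > R₀, Integrable (fun x => Real.exp (r * x)) F) :
    CondA (cmgf F) R₀ := by
  obtain ⟨r, hr, hexp⟩ := hR₀ltR
  have hF : ∀ᵐ x ∂F, 0 ≤ x :=
    (measure_eq_zero_iff_ae_notMem.1 hsupp).mono fun _ hx => not_lt.1 hx
  have hequi : EquicontinuousOn (fun θ s : ℝ => cmgf F (s + θ * I)) (Icc 0 R₀) :=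
    (LipschitzOnWith.uniformEquicontinuousOn _ _ fun θ =>
      (lipschitzOnWith_cmgf_vertical hF hr hexp θ).mono Icc_subset_Iic_self).equicontinuousOn
  have hunif : TendstoUniformlyOn (fun θ s : ℝ => cmgf F (s + θ * I)) 0 (cocompact ℝ)
      (Icc 0 R₀) :=
    hequi.tendstoUniformlyOn_of_tendsto isCompact_Icc fun s _ =>
      tendsto_cmgf_vertical_cocompact hac s
  refine ⟨2, two_pos, ?_⟩
  rw [sup_comm, ← cocompact_eq_atBot_atTop]
  filter_upwards [Metric.tendstoUniformlyOn_iff.1 hunif 2⁻¹ (by norm_num)] with θ hθ s hs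
  have hsmall : ‖cmgf F (s + θ * I)‖ < 2⁻¹ := by simpa using hθ s hs
  linarith [norm_sub_norm_le 1 (cmgf F (s + θ * I)), norm_one (α := ℂ)]

end
end

section
/- If Condition (A) holds at level R₀ < R, then the equation g(z) = 1 has only finitely many solutions in S_{R₀} = {z ∈ ℂ : Re z < R₀}; moreover every such solution satisfies 0 ≤ Re z ≤ R₀ and lies in a compact rectangle {0 ≤ Re z ≤ R₀, |Im z| ≤ M} for some M > 0. -/
/-!
Condition (A) bounds `|Im z|` for the roots of `g z = 1` in the strip `0 ≤ Re z ≤ R₀`, and it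
also rules out `F = δ₀`, i.e. `g ≡ 1`. For `Re z < 0` we have `|g z| ≤ g (Re z) ≤ 1`, with
equality only if `F = δ₀`, so there are no roots to the left of the imaginary axis. Hence all
roots in `Re z < R₀` lie in a compact rectangle inside the half-plane `Re z < R`, where `g` is
analytic and not identically `1`; its `1`-points are isolated there, so finitely many.
-/

open MeasureTheory Filter Complex Set Asymptotics ProbabilityTheory

noncomputable section

theorem AnalyticOnNhd.finite_inter_setOf_eq {𝕜 E : Type*} [NontriviallyNormedField 𝕜]
    [NormedAddCommGroup E] [NormedSpace 𝕜 E] {U K : Set 𝕜} {f : 𝕜 → E} {a : E} {w : 𝕜}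
    (hf : AnalyticOnNhd 𝕜 f U) (hU : IsPreconnected U) (hK : IsCompact K) (hKU : K ⊆ U)
    (hwU : w ∈ U) (hw : f w ≠ a) : (K ∩ {z | f z = a}).Finite := by
  rcases hf.eqOn_or_eventually_ne_of_preconnected analyticOnNhd_const hU with h | h
  · exact absurd (h hwU) hw
  · simpa [Set.sdiff_eq, Set.compl_ofPred] using
      hK.finite_sdiff_of_mem_codiscreteWithin (codiscreteWithin_mono hKU h)

theorem CondA.exists_abs_im_le {g : ℂ → ℂ} {R₀ : ℝ} (hA : CondA g R₀) :
    ∃ M > (0 : ℝ), ∀ z : ℂ, 0 ≤ z.re → z.re ≤ R₀ → g z = 1 → |z.im| ≤ M := by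
  obtain ⟨C, -, hev⟩ := hA
  rw [sup_comm, ← comap_abs_atTop, eventually_comap, eventually_atTop] at hev
  obtain ⟨M, hM⟩ := hev
  refine ⟨max M 1, by positivity, fun z h0 hR₀ hz => ?_⟩
  by_contra! hlt
  have := hM |z.im| ((le_max_left _ _).trans hlt.le) z.im rfl z.re ⟨h0, hR₀⟩
  simp [Complex.re_add_im, hz] at this
  linarith

theorem CondA.exists_ne_one {g : ℂ → ℂ} {R₀ : ℝ} (hA : CondA g R₀) (hR₀ : 0 ≤ R₀) :
    ∃ θ : ℝ, g (θ * I) ≠ 1 := by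
  obtain ⟨M, hM, hbound⟩ := hA.exists_abs_im_le
  refine ⟨M + 1, fun h => ?_⟩
  have := hbound _ (by simp) (by simpa using hR₀) h
  simp [abs_of_pos (by linarith : 0 < M + 1)] at this
  linarith

theorem cmgf_eq_complexMGF (F : Measure ℝ) : cmgf F = complexMGF id F := rfl

theorem Iic_subset_integrableExpSet_id {F : Measure ℝ} (hF : ∀ᵐ x ∂F, 0 ≤ x) {r : ℝ}
    (hr : Integrable (fun x => Real.exp (r * x)) F) : Iic r ⊆ integrableExpSet id F := by
  intro t (ht : t ≤ r)
  refine hr.mono' (by fun_prop) ?_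
  filter_upwards [hF] with x hx
  rw [Real.norm_eq_abs, Real.abs_exp]
  exact Real.exp_le_exp.2 (mul_le_mul_of_nonneg_right ht hx)

theorem analyticOnNhd_cmgf {F : Measure ℝ} (hF : ∀ᵐ x ∂F, 0 ≤ x) {r : ℝ}
    (hr : Integrable (fun x => Real.exp (r * x)) F) :
    AnalyticOnNhd ℂ (cmgf F) {z | z.re < r} := by
  rw [cmgf_eq_complexMGF]
  refine analyticOnNhd_complexMGF.mono fun z (hz : z.re < r) => ?_
  exact interior_mono (Iic_subset_integrableExpSet_id hF hr) (by rwa [interior_Iic])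

theorem cmgf_eq_one_of_ae_eq_zero {F : Measure ℝ} [IsProbabilityMeasure F]
    (h : ∀ᵐ x ∂F, x = 0) (z : ℂ) : cmgf F z = 1 := by
  rw [cmgf, integral_congr_ae (g := fun _ => 1) (by filter_upwards [h] with x hx; simp [hx])]
  simp

theorem ae_eq_zero_of_mgf_id_eq_one {F : Measure ℝ} [IsProbabilityMeasure F]
    (hF : ∀ᵐ x ∂F, 0 ≤ x) {t : ℝ} (ht : t < 0) (h : mgf id F t = 1) : ∀ᵐ x ∂F, x = 0 := by
  have hle : (fun x => Real.exp (t * x)) ≤ᵐ[F] fun _ => 1 := by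
    filter_upwards [hF] with x hx
    exact Real.exp_le_one_iff.2 (mul_nonpos_of_nonpos_of_nonneg ht.le hx)
  have hint : Integrable (fun x => Real.exp (t * x)) F :=
    (integrable_const 1).mono' (by fun_prop) <| by
      filter_upwards [hle] with x hx
      rwa [Real.norm_of_nonneg (Real.exp_pos _).le]
  have heq := (integral_eq_iff_of_ae_le hint (integrable_const 1) hle).1 (by simpa [mgf] using h)
  filter_upwards [heq] with x hx
  simpa [ht.ne] using hx

theorem re_nonneg_of_cmgf_eq_one {F : Measure ℝ} [IsProbabilityMeasure F]
    (hF : ∀ᵐ x ∂F, 0 ≤ x) (hdeg : ¬ ∀ᵐ x ∂F, x = 0) {z : ℂ} (hz : cmgf F z = 1) :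
    0 ≤ z.re := by
  by_contra! hneg
  refine hdeg (ae_eq_zero_of_mgf_id_eq_one hF hneg (le_antisymm ?_ ?_))
  · calc mgf id F z.re ≤ mgf 0 F z.re := mgf_anti_of_nonpos hF hneg.le (by simp)
      _ = 1 := by simp [mgf_zero_fun]
  · simpa [← cmgf_eq_complexMGF, hz] using norm_complexMGF_le_mgf (X := id) (μ := F) (z := z)

/-- **Finitely many roots of `g(z) = 1` under Condition (A).**
If Condition (A) holds at level `R₀ < R`, then the equation `g(z) = 1` has only finitely
many solutions in `S_{R₀} = {Re z < R₀}`; moreover every such solution satisfies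
`0 ≤ Re z ≤ R₀` and lies in a compact rectangle `{0 ≤ Re z ≤ R₀, |Im z| ≤ M}`. -/
theorem finite_roots_of_condA
    (F : Measure ℝ) [IsProbabilityMeasure F]
    (hsupp : F (Set.Iio 0) = 0)
    (R₀ : ℝ) (hR₀pos : 0 < R₀)
    (hR₀ltR : ∃ r > R₀, Integrable (fun x => Real.exp (r * x)) F)
    (hA : CondA (cmgf F) R₀) :
    {z : ℂ | z.re < R₀ ∧ cmgf F z = 1}.Finite ∧
    ∃ M > (0:ℝ), ∀ z : ℂ, z.re < R₀ → cmgf F z = 1 →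
      0 ≤ z.re ∧ z.re ≤ R₀ ∧ |z.im| ≤ M := by
  obtain ⟨r, hrR₀, hr⟩ := hR₀ltR
  have hF : ∀ᵐ x ∂F, 0 ≤ x := ae_iff.2 (by simpa [not_le] using! hsupp)
  obtain ⟨M, hM, him⟩ := hA.exists_abs_im_le
  obtain ⟨θ, hθ⟩ := hA.exists_ne_one hR₀pos.le
  have hdeg : ¬ ∀ᵐ x ∂F, x = 0 := fun h => hθ (cmgf_eq_one_of_ae_eq_zero h _)
  have hroots : ∀ z : ℂ, z.re < R₀ → cmgf F z = 1 → 0 ≤ z.re ∧ z.re ≤ R₀ ∧ |z.im| ≤ M :=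
    fun z hz h1 =>
      have h0 := re_nonneg_of_cmgf_eq_one hF hdeg h1
      ⟨h0, hz.le, him z h0 hz.le h1⟩
  refine ⟨?_, M, hM, hroots⟩
  have hK : IsCompact (Icc 0 R₀ ×ℂ Icc (-M) M) := isCompact_Icc.reProdIm isCompact_Icc
  have hKU : Icc 0 R₀ ×ℂ Icc (-M) M ⊆ {z | z.re < r} := fun z hz => hz.1.2.trans_lt hrR₀
  have hθU : (θ * I : ℂ) ∈ {z : ℂ | z.re < r} := by simpa using hR₀pos.trans hrR₀
  refine ((analyticOnNhd_cmgf hF hr).finite_inter_setOf_eq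
    (convex_halfSpace_re_lt r).isPreconnected hK hKU hθU hθ).subset ?_
  rintro z ⟨hz, h1⟩
  obtain ⟨h0, hR₀, habs⟩ := hroots z hz h1
  exact ⟨⟨⟨h0, hR₀⟩, abs_le.1 habs⟩, h1⟩

end
end
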